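/- arXiv:2210.17279 — 4 statements merged into one kernel-verified Lean document; each statement's English description precedes it below -/
import Mathlib

section
/- Let A ∈ ℝ^{n×n}, B ∈ ℝ^{n×m}, t0 < tf, x0, xf ∈ ℝ^n, and suppose the controllability Gramian G := ∫_{t0}^{tf} exp((tf−τ)A)·B·Bᵀ·exp(−(τ−t0)Aᵀ) dτ is invertible. For u⁻ ∈ L²([t0,tf];ℝ^m), set y(tf) := exp((tf−t0)A)·x0 + ∫_{t0}^{tf} exp((tf−τ)A)·B·u⁻(τ) dτ and λ̄ := G⁻¹·(y(tf) − xf). Then the function P(t) := u⁻(t) − Bᵀ·exp(−(t−t0)Aᵀ)·λ̄ is the metric projection of u⁻ onto 𝒜: P ∈ 𝒜 and ‖u⁻ − P‖_{L²} ≤ ‖u⁻ − y‖_{L²} for every y ∈ 𝒜. -/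
/-!
The endpoint response `R z = ∫ exp((tf - τ) A) B z(τ) dτ` is linear in the control, and the
feasible set is the affine subspace `R z = xf - exp((tf - t0) A) x0`. The correction
`v(t) = Bᵀ exp(-(t - t0) Aᵀ) λ̄` has `R v = G λ̄ = y(tf) - xf`, so `P = u⁻ - v` is feasible.
Since `exp(-(t - t0) A) = exp((t0 - tf) A) exp((tf - t) A)`, the pairing `∫ v ⬝ w` equals
`λ̄ ⬝ exp((t0 - tf) A) R w`; hence `v` is orthogonal to `P - y` for every feasible `y`, and
Pythagoras gives `‖u⁻ - y‖² = ‖v‖² + ‖P - y‖² ≥ ‖u⁻ - P‖²`.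
-/

open MeasureTheory Matrix

attribute [local instance] Matrix.normedAddCommGroup Matrix.normedSpace

open NormedSpace

variable {ι κ : Type*} [Fintype ι] [Fintype κ]

-- Continuity only depends on the topology, so any Banach algebra norm on matrices will do.
@[fun_prop]
theorem Matrix.continuous_exp [DecidableEq ι] : Continuous (exp : Matrix ι ι ℝ → Matrix ι ι ℝ) :=
  open scoped Norms.Operator in exp_continuous

theorem Matrix.exp_add_smul [DecidableEq ι] (A : Matrix ι ι ℝ) (s t : ℝ) :
    exp ((s + t) • A) = exp (s • A) * exp (t • A) := by
  rw [add_smul]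
  exact exp_add_of_commute _ _ (((Commute.refl A).smul_left s).smul_right t)

theorem Continuous.memLp_restrict_Icc {E : Type*} [NormedAddCommGroup E] {f : ℝ → E}
    (hf : Continuous f) (a b : ℝ) (p : ENNReal) : MemLp f p (volume.restrict (Set.Icc a b)) := by
  obtain ⟨C, hC⟩ := isCompact_Icc.exists_bound_of_continuousOn hf.continuousOn
  exact MemLp.of_bound hf.aestronglyMeasurable C (ae_restrict_of_forall_mem measurableSet_Icc hC)

theorem MemLp.intervalIntegrable {E : Type*} [NormedAddCommGroup E] {f : ℝ → E} {a b : ℝ}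
    {p : ENNReal} (hp : 1 ≤ p) (hf : MemLp f p (volume.restrict (Set.Icc a b))) (hab : a ≤ b) :
    IntervalIntegrable f volume a b :=
  (intervalIntegrable_iff_integrableOn_Icc_of_le hab).2 (hf.integrable hp)

section IntervalIntegral

variable {μ : Measure ℝ} {a b : ℝ}

theorem IntervalIntegrable.continuous_mulVec {M : ℝ → Matrix κ ι ℝ} (hM : Continuous M)
    {w : ℝ → ι → ℝ} (hw : IntervalIntegrable w μ a b) :
    IntervalIntegrable (fun t => M t *ᵥ w t) μ a b := by
  have hsum : (fun t => M t *ᵥ w t) = ∑ j, fun t => w t j • (fun i => M t i j) := by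
    ext t i
    simp [mulVec, dotProduct, Finset.sum_apply, mul_comm]
  rw [hsum]
  refine IntervalIntegrable.sum _ fun j _ => ?_
  have hwj : IntervalIntegrable (fun t => w t j) μ a b := ⟨hw.1.eval j, hw.2.eval j⟩
  exact hwj.smul_continuousOn (by fun_prop)

namespace intervalIntegral

theorem integral_mulVec_const [IsLocallyFiniteMeasure μ] {M : ℝ → Matrix κ ι ℝ}
    (hM : Continuous M) (c : ι → ℝ) :
    ∫ t in a..b, M t *ᵥ c ∂μ = (∫ t in a..b, M t ∂μ) *ᵥ c :=
  ((mulVecBilin ℝ ℝ).flip c).toContinuousLinearMap.intervalIntegral_comp_comm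
    (hM.intervalIntegrable a b)

theorem integral_const_mulVec (C : Matrix κ ι ℝ) {w : ℝ → ι → ℝ}
    (hw : IntervalIntegrable w μ a b) : ∫ t in a..b, C *ᵥ w t ∂μ = C *ᵥ ∫ t in a..b, w t ∂μ :=
  (mulVecLin C).toContinuousLinearMap.intervalIntegral_comp_comm hw

theorem integral_const_dotProduct (c : ι → ℝ) {w : ℝ → ι → ℝ}
    (hw : IntervalIntegrable w μ a b) : ∫ t in a..b, c ⬝ᵥ w t ∂μ = c ⬝ᵥ ∫ t in a..b, w t ∂μ :=
  (dotProductBilin ℝ ℝ c).toContinuousLinearMap.intervalIntegral_comp_comm hw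

end intervalIntegral

end IntervalIntegral

theorem integral_sum_sq_sub_le_of_integral_dotProduct_eq_zero {α : Type*} [MeasurableSpace α]
    {ν : Measure α} {u p y : α → κ → ℝ} (hu : MemLp u 2 ν) (hp : MemLp p 2 ν) (hy : MemLp y 2 ν)
    (horth : ∫ x, (u x - p x) ⬝ᵥ (p x - y x) ∂ν = 0) :
    ∫ x, ∑ i, (u x i - p x i) ^ 2 ∂ν ≤ ∫ x, ∑ i, (u x i - y x i) ^ 2 ∂ν := by
  have hup : ∀ i, MemLp (fun x => u x i - p x i) 2 ν := fun i => (hu.eval i).sub (hp.eval i)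
  have hpy : ∀ i, MemLp (fun x => p x i - y x i) 2 ν := fun i => (hp.eval i).sub (hy.eval i)
  have hup_sq : Integrable (fun x => ∑ i, (u x i - p x i) ^ 2) ν :=
    integrable_finsetSum _ fun i _ => (hup i).integrable_sq
  have hpy_sq : Integrable (fun x => ∑ i, (p x i - y x i) ^ 2) ν :=
    integrable_finsetSum _ fun i _ => (hpy i).integrable_sq
  have hdot : Integrable (fun x => 2 * ((u x - p x) ⬝ᵥ (p x - y x))) ν :=
    (integrable_finsetSum _ fun i _ => (hup i).integrable_mul (hpy i)).const_mul 2
  have hrest : Integrable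
      (fun x => 2 * ((u x - p x) ⬝ᵥ (p x - y x)) + ∑ i, (p x i - y x i) ^ 2) ν :=
    hdot.add hpy_sq
  have hpyth : ∀ x, ∑ i, (u x i - y x i) ^ 2 = ∑ i, (u x i - p x i) ^ 2
      + (2 * ((u x - p x) ⬝ᵥ (p x - y x)) + ∑ i, (p x i - y x i) ^ 2) := by
    intro x
    simp only [dotProduct, Pi.sub_apply, Finset.mul_sum, ← Finset.sum_add_distrib]
    exact Finset.sum_congr rfl fun i _ => by ring
  simp_rw [hpyth]
  rw [integral_add hup_sq hrest, integral_add hdot hpy_sq, integral_const_mul, horth]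
  simpa using integral_nonneg fun x => Finset.sum_nonneg fun i _ => sq_nonneg (p x i - y x i)

section LinearControl

variable [DecidableEq ι] (A : Matrix ι ι ℝ) (B : Matrix ι κ ℝ) (t0 tf : ℝ)

noncomputable def controlResponse (z : ℝ → κ → ℝ) : ι → ℝ :=
  ∫ τ in t0..tf, exp ((tf - τ) • A) *ᵥ (B *ᵥ z τ)

variable {A B t0 tf}

theorem intervalIntegrable_controlResponse_integrand {z : ℝ → κ → ℝ}
    (hz : IntervalIntegrable z volume t0 tf) :
    IntervalIntegrable (fun τ => exp ((tf - τ) • A) *ᵥ (B *ᵥ z τ)) volume t0 tf :=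
  (hz.continuous_mulVec continuous_const).continuous_mulVec (by fun_prop)

theorem controlResponse_sub {z w : ℝ → κ → ℝ} (hz : IntervalIntegrable z volume t0 tf)
    (hw : IntervalIntegrable w volume t0 tf) :
    controlResponse A B t0 tf (fun t => z t - w t) =
      controlResponse A B t0 tf z - controlResponse A B t0 tf w := by
  simp only [controlResponse, mulVec_sub]
  exact intervalIntegral.integral_sub (intervalIntegrable_controlResponse_integrand hz)
    (intervalIntegrable_controlResponse_integrand hw)

theorem controlResponse_gramian (lam : ι → ℝ) :
    controlResponse A B t0 tf (fun t => Bᵀ *ᵥ (exp ((-(t - t0)) • Aᵀ) *ᵥ lam)) =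
      (∫ τ in t0..tf, exp ((tf - τ) • A) * B * Bᵀ * exp ((-(τ - t0)) • Aᵀ)) *ᵥ lam := by
  rw [← intervalIntegral.integral_mulVec_const (by fun_prop)]
  simp only [controlResponse, mulVec_mulVec, Matrix.mul_assoc]

theorem integral_dotProduct_eq_dotProduct_controlResponse (lam : ι → ℝ) {z : ℝ → κ → ℝ}
    (hz : IntervalIntegrable z volume t0 tf) :
    ∫ t in t0..tf, (Bᵀ *ᵥ (exp ((-(t - t0)) • Aᵀ) *ᵥ lam)) ⬝ᵥ z t =
      lam ⬝ᵥ (exp ((t0 - tf) • A) *ᵥ controlResponse A B t0 tf z) := by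
  have hadjoint : ∀ t, (Bᵀ *ᵥ (exp ((-(t - t0)) • Aᵀ) *ᵥ lam)) ⬝ᵥ z t =
      lam ⬝ᵥ (exp ((t0 - tf) • A) *ᵥ (exp ((tf - t) • A) *ᵥ (B *ᵥ z t))) := by
    intro t
    rw [mulVec_mulVec (M := exp ((t0 - tf) • A)), ← exp_add_smul,
      show t0 - tf + (tf - t) = -(t - t0) by ring, ← transpose_smul, exp_transpose,
      mulVec_transpose, mulVec_transpose, dotProduct_mulVec, dotProduct_mulVec]
  simp_rw [hadjoint]
  rw [intervalIntegral.integral_const_dotProduct _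
      ((intervalIntegrable_controlResponse_integrand hz).continuous_mulVec continuous_const),
    intervalIntegral.integral_const_mulVec _ (intervalIntegrable_controlResponse_integrand hz),
    controlResponse]

end LinearControl

/-- If the controllability Gramian `G` is invertible, then with
`λ̄ = G⁻¹ (y(tf) - xf)` the function `P(t) = u⁻(t) - Bᵀ exp(-(t - t0) Aᵀ) λ̄` is the
metric projection of `u⁻` onto the feasible affine set
`𝒜 = {u ∈ L² : exp((tf - t0) A) x0 + ∫ exp((tf - τ) A) B u(τ) dτ = xf}`. -/
theorem projection_onto_affine_set
    (n m : ℕ) (A : Matrix (Fin n) (Fin n) ℝ) (B : Matrix (Fin n) (Fin m) ℝ)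
    (t0 tf : ℝ) (ht : t0 < tf) (x0 xf : Fin n → ℝ)
    (G : Matrix (Fin n) (Fin n) ℝ)
    (hG : G = ∫ τ in t0..tf,
      NormedSpace.exp ((tf - τ) • A) * B * Bᵀ * NormedSpace.exp ((-(τ - t0)) • Aᵀ))
    (hGinv : IsUnit G)
    (u : ℝ → Fin m → ℝ)
    (hu : MemLp u 2 (volume.restrict (Set.Icc t0 tf)))
    (ytf : Fin n → ℝ)
    (hytf : ytf = (NormedSpace.exp ((tf - t0) • A)).mulVec x0 +
      ∫ τ in t0..tf, (NormedSpace.exp ((tf - τ) • A)).mulVec (B.mulVec (u τ)))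
    (lam : Fin n → ℝ) (hlam : lam = G⁻¹.mulVec (ytf - xf))
    (P : ℝ → Fin m → ℝ)
    (hP : ∀ t, P t = u t - (Bᵀ).mulVec ((NormedSpace.exp ((-(t - t0)) • Aᵀ)).mulVec lam)) :
    (MemLp P 2 (volume.restrict (Set.Icc t0 tf)) ∧
      (NormedSpace.exp ((tf - t0) • A)).mulVec x0 +
        (∫ τ in t0..tf, (NormedSpace.exp ((tf - τ) • A)).mulVec (B.mulVec (P τ))) = xf) ∧
    ∀ y : ℝ → Fin m → ℝ,
      MemLp y 2 (volume.restrict (Set.Icc t0 tf)) →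
      (NormedSpace.exp ((tf - t0) • A)).mulVec x0 +
        (∫ τ in t0..tf, (NormedSpace.exp ((tf - τ) • A)).mulVec (B.mulVec (y τ))) = xf →
      (∫ t in t0..tf, ∑ i, (u t i - P t i) ^ 2) ≤ ∫ t in t0..tf, ∑ i, (u t i - y t i) ^ 2 := by
  set v : ℝ → Fin m → ℝ := fun t => Bᵀ *ᵥ (exp ((-(t - t0)) • Aᵀ) *ᵥ lam)
  have hPuv : P = fun t => u t - v t := funext hP
  have hintegrable : ∀ {z : ℝ → Fin m → ℝ}, MemLp z 2 (volume.restrict (Set.Icc t0 tf)) →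
      IntervalIntegrable z volume t0 tf := fun hz => MemLp.intervalIntegrable one_le_two hz ht.le
  have hv_mem : MemLp v 2 (volume.restrict (Set.Icc t0 tf)) :=
    Continuous.memLp_restrict_Icc (by fun_prop) _ _ _
  have hP_mem : MemLp P 2 (volume.restrict (Set.Icc t0 tf)) := hPuv ▸ hu.sub hv_mem
  have hP_resp : controlResponse A B t0 tf P = xf - exp ((tf - t0) • A) *ᵥ x0 := by
    rw [hPuv, controlResponse_sub (hintegrable hu) (hintegrable hv_mem), controlResponse_gramian,
      ← hG, hlam, mulVec_mulVec, mul_nonsing_inv _ ((isUnit_iff_isUnit_det G).mp hGinv),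
      one_mulVec, hytf, controlResponse]
    abel
  refine ⟨⟨hP_mem, add_eq_of_eq_sub' hP_resp⟩, fun y hy hy_feas => ?_⟩
  have hy_resp : controlResponse A B t0 tf y = xf - exp ((tf - t0) • A) *ᵥ x0 :=
    eq_sub_of_add_eq' hy_feas
  have hu_sub_P : ∀ t, u t - P t = v t := fun t => by rw [hP t, sub_sub_cancel]
  have horth : ∫ t in t0..tf, (u t - P t) ⬝ᵥ (P t - y t) = 0 := by
    simp only [hu_sub_P, v]
    rw [integral_dotProduct_eq_dotProduct_controlResponse (z := fun t => P t - y t) lam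
        (hintegrable (hP_mem.sub hy)),
      controlResponse_sub (hintegrable hP_mem) (hintegrable hy), hP_resp, hy_resp, sub_self,
      mulVec_zero, dotProduct_zero]
  have hIoc : volume.restrict (Set.Ioc t0 tf) ≤ volume.restrict (Set.Icc t0 tf) :=
    Measure.restrict_mono Set.Ioc_subset_Icc_self le_rfl
  simp only [intervalIntegral.integral_of_le ht.le] at horth ⊢
  exact integral_sum_sq_sub_le_of_integral_dotProduct_eq_zero (hu.mono_measure hIoc)
    (hP_mem.mono_measure hIoc) (hy.mono_measure hIoc) horth
end

section
/- Let ω0 > 0 and A = [[0, 1], [−ω0², −2ω0]] ∈ ℝ^{2×2}. Then ∫_0^{2π} exp((2π−τ)·A)·(0, τ·e^{ω0 τ})ᵀ dτ = (y11, y12)ᵀ and ∫_0^{2π} exp((2π−τ)·A)·(0, −e^{ω0 τ}(ω0 τ + 1))ᵀ dτ = (y21, y22)ᵀ, where y11 = e^{−2πω0}·(2πω0 − e^{4πω0} + 2πω0·e^{4πω0} + 1)/(4ω0³), y12 = π·sinh(2πω0)/ω0, y21 = −π·sinh(2πω0)/ω0, and y22 = −e^{−2πω0}·(2πω0 + e^{4πω0}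 + 2πω0·e^{4πω0} − 1)/(4ω0). -/
open Real

lemma sq_zero_exp (M : Matrix (Fin 2) (Fin 2) ℝ) (h : M * M = 0) :
    NormedSpace.exp M = 1 + M := by
  simp only [NormedSpace.exp_eq_tsum ℝ]
  rw [tsum_eq_sum (s := Finset.range 2)]
  · simp [Finset.sum_range_succ, Nat.factorial]
  · intro n hn
    have h2 : 2 ≤ n := by simp at hn; omega
    obtain ⟨k, rfl⟩ := Nat.exists_eq_add_of_le h2
    rw [pow_add, pow_two, h, zero_mul, smul_zero]

lemma scalar_exp (c : ℝ) :
    NormedSpace.exp (c • (1 : Matrix (Fin 2) (Fin 2) ℝ)) = Real.exp c • 1 := by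
  letI : SeminormedRing (Matrix (Fin 2) (Fin 2) ℝ) := Matrix.linftyOpSemiNormedRing
  letI : NormedRing (Matrix (Fin 2) (Fin 2) ℝ) := Matrix.linftyOpNormedRing
  letI : NormedAlgebra ℝ (Matrix (Fin 2) (Fin 2) ℝ) := Matrix.linftyOpNormedAlgebra
  rw [← Algebra.algebraMap_eq_smul_one, ← Algebra.algebraMap_eq_smul_one, Real.exp_eq_exp_ℝ]
  exact (NormedSpace.algebraMap_exp_comm c).symm

lemma exp_formula (ω0 s : ℝ) :
    NormedSpace.exp (s • (!![0, 1; -ω0 ^ 2, -2 * ω0] : Matrix (Fin 2) (Fin 2) ℝ)) =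
      Real.exp (-(ω0 * s)) • (1 + s • (!![ω0, 1; -ω0 ^ 2, -ω0] : Matrix (Fin 2) (Fin 2) ℝ)) := by
  have hsplit : s • (!![0, 1; -ω0 ^ 2, -2 * ω0] : Matrix (Fin 2) (Fin 2) ℝ) =
      (-(ω0 * s)) • (1 : Matrix (Fin 2) (Fin 2) ℝ) +
        s • (!![ω0, 1; -ω0 ^ 2, -ω0] : Matrix (Fin 2) (Fin 2) ℝ) := by
    ext i j
    fin_cases i <;> fin_cases j <;>
      simp [Matrix.one_apply, Matrix.smul_apply] <;> ring
  rw [hsplit, Matrix.exp_add_of_commute, scalar_exp, sq_zero_exp]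
  · rw [Matrix.smul_mul, Matrix.one_mul]
  · ext i j
    fin_cases i <;> fin_cases j <;>
      simp [Matrix.mul_apply, Fin.sum_univ_two, Matrix.smul_apply] <;> ring
  · exact (Commute.one_left _).smul_left _ |>.smul_right _

lemma vec_integral (f g : ℝ → ℝ) (hf : Continuous f) (hg : Continuous g) (a b : ℝ) :
    (∫ τ in a..b, ![f τ, g τ]) =
      ![∫ τ in a..b, f τ, ∫ τ in a..b, g τ] := by
  have h1 : (fun τ => ![f τ, g τ]) =
      fun τ => f τ • (![1, 0] : Fin 2 → ℝ) + g τ • (![0, 1] : Fin 2 → ℝ) := by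
    funext τ
    ext i
    fin_cases i <;> simp
  rw [h1, intervalIntegral.integral_add
      ((Continuous.intervalIntegrable (by fun_prop) a b :
        IntervalIntegrable (fun τ => f τ • (![1, 0] : Fin 2 → ℝ)) MeasureTheory.volume a b))
      ((Continuous.intervalIntegrable (by fun_prop) a b :
        IntervalIntegrable (fun τ => g τ • (![0, 1] : Fin 2 → ℝ)) MeasureTheory.volume a b)),
    intervalIntegral.integral_smul_const, intervalIntegral.integral_smul_const]
  ext i
  fin_cases i <;> simp

lemma poly_exp_integral (a b c k : ℝ) (hk : k ≠ 0) (T : ℝ) :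
    (∫ τ in (0:ℝ)..T, (a + b * τ + c * τ ^ 2) * Real.exp (k * τ)) =
      Real.exp (k * T) * (c / k * T ^ 2 + (b - 2 * c / k) / k * T
        + (a - (b - 2 * c / k) / k) / k)
      - (a - (b - 2 * c / k) / k) / k := by
  have key : ∀ τ : ℝ, HasDerivAt
      (fun t => Real.exp (k * t) * (c / k * t ^ 2 + (b - 2 * c / k) / k * t
        + (a - (b - 2 * c / k) / k) / k))
      ((a + b * τ + c * τ ^ 2) * Real.exp (k * τ)) τ := by
    intro τ
    have h1 : HasDerivAt (fun t : ℝ => Real.exp (k * t)) (Real.exp (k * τ) * k) τ := by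
      simpa using ((hasDerivAt_id τ).const_mul k).exp
    have h2 : HasDerivAt (fun t : ℝ => c / k * t ^ 2 + (b - 2 * c / k) / k * t
        + (a - (b - 2 * c / k) / k) / k)
        (c / k * (2 * τ) + (b - 2 * c / k) / k) τ := by
      have := (((hasDerivAt_pow 2 τ).const_mul (c / k)).add
        ((hasDerivAt_id τ).const_mul ((b - 2 * c / k) / k))).add_const
        ((a - (b - 2 * c / k) / k) / k)
      refine this.congr_deriv ?_
      norm_num
    have := h1.mul h2
    refine this.congr_deriv ?_
    field_simp
    ring
  rw [intervalIntegral.integral_eq_sub_of_hasDerivAt (fun τ _ => key τ)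
    ((Continuous.intervalIntegrable (by fun_prop) 0 T))]
  simp


/-- Computation of the Jacobian entries for the critically-damped harmonic oscillator:
the two defining integrals evaluate to `(y11, y12)ᵀ` and `(y21, y22)ᵀ` with the stated
closed-form expressions. -/
theorem jacobian_critically_damped_oscillator
    (ω0 : ℝ) (hω0 : 0 < ω0)
    (A : Matrix (Fin 2) (Fin 2) ℝ) (hA : A = !![0, 1; -ω0 ^ 2, -2 * ω0])
    (y11 y12 y21 y22 : ℝ)
    (h11 : y11 = Real.exp (-(2 * π * ω0)) *
      (2 * π * ω0 - Real.exp (4 * π * ω0) + 2 * π * ω0 * Real.exp (4 * π * ω0) + 1)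
      / (4 * ω0 ^ 3))
    (h12 : y12 = π * Real.sinh (2 * π * ω0) / ω0)
    (h21 : y21 = -(π * Real.sinh (2 * π * ω0) / ω0))
    (h22 : y22 = -(Real.exp (-(2 * π * ω0)) *
      (2 * π * ω0 + Real.exp (4 * π * ω0) + 2 * π * ω0 * Real.exp (4 * π * ω0) - 1)
      / (4 * ω0))) :
    (∫ τ in (0:ℝ)..(2 * π), (NormedSpace.exp ((2 * π - τ) • A)).mulVec
        ![0, τ * Real.exp (ω0 * τ)]) = ![y11, y12] ∧
    (∫ τ in (0:ℝ)..(2 * π), (NormedSpace.exp ((2 * π - τ) • A)).mulVec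
        ![0, -(Real.exp (ω0 * τ) * (ω0 * τ + 1))]) = ![y21, y22] := by
  subst hA
  have hk : (2 * ω0) ≠ 0 := by positivity
  set E := Real.exp (2 * π * ω0) with hE
  have hEpos : 0 < E := Real.exp_pos _
  have h4 : Real.exp (4 * π * ω0) = E ^ 2 := by
    rw [hE, sq, ← Real.exp_add]; ring_nf
  have hneg : Real.exp (-(2 * π * ω0)) = E⁻¹ := by
    rw [hE, ← Real.exp_neg]
  have hkT : Real.exp (2 * ω0 * (2 * π)) = E ^ 2 := by
    rw [hE, sq, ← Real.exp_add]; ring_nf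
  have hsinh : Real.sinh (2 * π * ω0) = (E - E⁻¹) / 2 := by
    rw [hE, Real.sinh_eq, Real.exp_neg]
  have hExp : ∀ τ : ℝ, Real.exp (-(ω0 * (2 * π - τ))) * Real.exp (ω0 * τ) =
      Real.exp (-(2 * π * ω0)) * Real.exp (2 * ω0 * τ) := by
    intro τ
    rw [← Real.exp_add, ← Real.exp_add]; ring_nf
  constructor
  · have hfun : Set.EqOn
        (fun τ => (NormedSpace.exp ((2 * π - τ) •
            (!![0, 1; -ω0 ^ 2, -2 * ω0] : Matrix (Fin 2) (Fin 2) ℝ))).mulVec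
          ![0, τ * Real.exp (ω0 * τ)])
        (fun τ => ![Real.exp (-(2 * π * ω0)) *
            ((0 + 2 * π * τ + (-1) * τ ^ 2) * Real.exp (2 * ω0 * τ)),
          Real.exp (-(2 * π * ω0)) *
            ((0 + (1 - 2 * π * ω0) * τ + ω0 * τ ^ 2) * Real.exp (2 * ω0 * τ))])
        (Set.uIcc (0:ℝ) (2 * π)) := by
      intro τ _
      dsimp only
      rw [exp_formula]
      funext i
      fin_cases i <;>
        simp [Matrix.mulVec, dotProduct, Fin.sum_univ_two, Matrix.smul_apply,
          Matrix.add_apply, Matrix.one_apply, smul_eq_mul]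
      · linear_combination ((2 * π - τ) * τ) * hExp τ
      · linear_combination ((1 - ω0 * (2 * π - τ)) * τ) * hExp τ
    rw [intervalIntegral.integral_congr hfun, vec_integral _ _ (by fun_prop) (by fun_prop)]
    simp only [intervalIntegral.integral_const_mul,
      poly_exp_integral _ _ _ _ hk, hkT, hneg, h4, hsinh, h11, h12]
    funext i
    fin_cases i <;> simp <;> field_simp <;> ring
  · have hfun : Set.EqOn
        (fun τ => (NormedSpace.exp ((2 * π - τ) •
            (!![0, 1; -ω0 ^ 2, -2 * ω0] : Matrix (Fin 2) (Fin 2) ℝ))).mulVec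
          ![0, -(Real.exp (ω0 * τ) * (ω0 * τ + 1))])
        (fun τ => ![Real.exp (-(2 * π * ω0)) *
            ((-(2 * π) + (1 - 2 * π * ω0) * τ + ω0 * τ ^ 2) * Real.exp (2 * ω0 * τ)),
          Real.exp (-(2 * π * ω0)) *
            (((2 * π * ω0 - 1) + (-(ω0 * (2 - 2 * π * ω0))) * τ + (-(ω0 ^ 2)) * τ ^ 2) *
              Real.exp (2 * ω0 * τ))])
        (Set.uIcc (0:ℝ) (2 * π)) := by
      intro τ _
      dsimp only
      rw [exp_formula]
      funext i
      fin_cases i <;>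
        simp [Matrix.mulVec, dotProduct, Fin.sum_univ_two, Matrix.smul_apply,
          Matrix.add_apply, Matrix.one_apply, smul_eq_mul]
      · linear_combination (-((2 * π - τ) * (ω0 * τ + 1))) * hExp τ
      · linear_combination (-((1 - ω0 * (2 * π - τ)) * (ω0 * τ + 1))) * hExp τ
    rw [intervalIntegral.integral_congr hfun, vec_integral _ _ (by fun_prop) (by fun_prop)]
    simp only [intervalIntegral.integral_const_mul,
      poly_exp_integral _ _ _ _ hk, hkT, hneg, h4, hsinh, h21, h22]
    funext i
    fin_cases i <;> simp <;> field_simp <;> ring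
end

section
/- Let ω0 > 0, ζ > 1, and A = [[0, 1], [−ω0², −2ζω0]] ∈ ℝ^{2×2} (the over-damped harmonic oscillator system matrix). Set α := ω0 ζ, β := ω0·√(ζ² − 1), and η := (1/2)·ln|(β + α)/(β − α)|. Then for every t ∈ ℝ, exp(t·A) = (e^{−α t}/β)·[[ω0·sinh(β t + η), sinh(β t)], [−ω0²·sinh(β t), ω0·sinh(−β t + η)]]. -/
/-!
The matrix `A` is the companion matrix of `(X + α - β)(X + α + β)`, so it has the distinct
eigenvalues `-α ± β` with eigenvectors `(1, -α ± β)`, and diagonalising gives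
`exp (t • A) = P * diagonal (e^{(-α ± β) t}) * P⁻¹`. Since `α² - β² = ω0²`, the shift `η`
satisfies `e^{±η} = (α ± β) / ω0`, which turns the entries `(α + β) e^{βt} - (α - β) e^{-βt}`
and `(α + β) e^{-βt} - (α - β) e^{βt}` into `2 ω0 sinh (±βt + η)`.
-/

open NormedSpace Matrix

theorem Matrix.exp_eq_of_mul_eq_mul_diagonal {n 𝔸 : Type*} [Fintype n] [DecidableEq n]
    [NormedCommRing 𝔸] [NormedAlgebra ℚ 𝔸] [CompleteSpace 𝔸]
    {A P : Matrix n n 𝔸} {d : n → 𝔸} (hP : IsUnit P) (h : A * P = P * diagonal d) :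
    exp A = P * diagonal (exp d) * P⁻¹ := by
  have hconj : A = P * diagonal d * P⁻¹ := by
    rw [← h, Matrix.mul_assoc, Matrix.mul_nonsing_inv _ ((isUnit_iff_isUnit_det P).mp hP),
      Matrix.mul_one]
  rw [hconj, exp_conj P _ hP, exp_diagonal]

theorem Matrix.exp_smul_companion_fin_two {a b : ℝ} (hab : a ≠ b) (t : ℝ) :
    exp (t • !![0, 1; -(a * b), a + b]) =
      (a - b)⁻¹ •
        !![a * Real.exp (b * t) - b * Real.exp (a * t), Real.exp (a * t) - Real.exp (b * t);
          a * b * (Real.exp (b * t) - Real.exp (a * t)),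
          a * Real.exp (a * t) - b * Real.exp (b * t)] := by
  have hba : b - a ≠ 0 := sub_ne_zero.mpr hab.symm
  have hdet : (!![1, 1; a, b] : Matrix (Fin 2) (Fin 2) ℝ).det = b - a := by
    rw [det_fin_two_of]; ring
  have hP : IsUnit (!![1, 1; a, b] : Matrix (Fin 2) (Fin 2) ℝ) := by
    rw [isUnit_iff_isUnit_det, hdet, isUnit_iff_ne_zero]; exact hba
  have heigen : t • !![0, 1; -(a * b), a + b] * !![1, 1; a, b] =
      !![1, 1; a, b] * diagonal ![a * t, b * t] := by
    simp only [diagonal_vec2, mul_fin_two, smul_of, smul_cons, smul_eq_mul, smul_empty]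
    congr 1
    refine vec2_eq (vec2_eq ?_ ?_) (vec2_eq ?_ ?_) <;> ring
  rw [exp_eq_of_mul_eq_mul_diagonal hP heigen, inv_def, hdet, adjugate_fin_two_of,
    diagonal_fin_two]
  simp only [Pi.coe_exp, cons_val_zero, cons_val_one, ← Real.exp_eq_exp_ℝ, Ring.inverse_eq_inv',
    mul_fin_two, smul_of, smul_cons, smul_eq_mul, smul_empty]
  congr 1
  refine vec2_eq (vec2_eq ?_ ?_) (vec2_eq ?_ ?_) <;> field_simp <;> ring

theorem Real.exp_half_log_abs_div {ω α β : ℝ} (hω : 0 < ω) (hβα : |β| < α)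
    (hαβ : α ^ 2 - β ^ 2 = ω ^ 2) :
    Real.exp ((1 / 2) * Real.log |(β + α) / (β - α)|) = (α + β) / ω := by
  obtain ⟨hneg, hlt⟩ := abs_lt.mp hβα
  have hsq : |(β + α) / (β - α)| = ((α + β) / ω) ^ 2 := by
    rw [abs_div, abs_of_pos (by linarith), abs_of_neg (by linarith), div_pow,
      div_eq_div_iff (by linarith) (by positivity)]
    linear_combination -(α + β) * hαβ
  rw [hsq, Real.log_pow, Nat.cast_ofNat, ← mul_assoc, one_div_mul_cancel two_ne_zero, one_mul,
    Real.exp_log (div_pos (by linarith) hω)]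

theorem Real.mul_sinh_add_half_log_abs_div {ω α β : ℝ} (hω : 0 < ω) (hβα : |β| < α)
    (hαβ : α ^ 2 - β ^ 2 = ω ^ 2) (x : ℝ) :
    ω * Real.sinh (x + (1 / 2) * Real.log |(β + α) / (β - α)|) =
      ((α + β) * Real.exp x - (α - β) * Real.exp (-x)) / 2 := by
  have hpos : 0 < α + β := by linarith [neg_abs_le β]
  rw [Real.sinh_eq, neg_add, Real.exp_add, Real.exp_add, Real.exp_neg (_ * _),
    Real.exp_half_log_abs_div hω hβα hαβ]
  field_simp
  linear_combination Real.exp (-x) * hαβ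

/-- The state transition matrix of the over-damped harmonic oscillator: for `ω0 > 0`,
`ζ > 1`, `A = [[0, 1], [-ω0², -2ζω0]]`, `α = ω0 ζ`, `β = ω0 √(ζ² - 1)`,
`η = (1/2) ln|(β + α)/(β - α)|`, one has
`exp(t A) = (e^{-α t}/β) [[ω0 sinh(β t + η), sinh(β t)],
[-ω0² sinh(β t), ω0 sinh(-β t + η)]]` for every `t ∈ ℝ`. -/
theorem matrix_exp_over_damped_oscillator
    (ω0 ζ : ℝ) (hω0 : 0 < ω0) (hζ : 1 < ζ)
    (A : Matrix (Fin 2) (Fin 2) ℝ) (hA : A = !![0, 1; -ω0 ^ 2, -2 * ζ * ω0])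
    (α β η : ℝ) (hα : α = ω0 * ζ) (hβ : β = ω0 * Real.sqrt (ζ ^ 2 - 1))
    (hη : η = (1 / 2) * Real.log (|(β + α) / (β - α)|)) (t : ℝ) :
    NormedSpace.exp (t • A) =
      (Real.exp (-(α * t)) / β) •
        !![ω0 * Real.sinh (β * t + η), Real.sinh (β * t);
           -ω0 ^ 2 * Real.sinh (β * t), ω0 * Real.sinh (-(β * t) + η)] := by
  have hζ2 : 0 < ζ ^ 2 - 1 := by nlinarith
  have hβpos : 0 < β := hβ ▸ mul_pos hω0 (Real.sqrt_pos.mpr hζ2)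
  have hαβ : α ^ 2 - β ^ 2 = ω0 ^ 2 := by
    rw [hα, hβ, mul_pow, mul_pow, Real.sq_sqrt hζ2.le]; ring
  have hβα : |β| < α :=
    abs_lt_of_sq_lt_sq (by nlinarith) (hα ▸ mul_pos hω0 (by linarith)).le
  have hA' : A = !![0, 1; -((β - α) * (-β - α)), (β - α) + (-β - α)] := by
    rw [hA, ← hαβ, hα]; congr 1; ring_nf
  have hexp₁ : Real.exp ((β - α) * t) = Real.exp (-(α * t)) * Real.exp (β * t) := by
    rw [← Real.exp_add]; ring_nf
  have hexp₂ : Real.exp ((-β - α) * t) = Real.exp (-(α * t)) * Real.exp (-(β * t)) := by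
    rw [← Real.exp_add]; ring_nf
  subst hη
  rw [hA', exp_smul_companion_fin_two (by linarith) t,
    Real.mul_sinh_add_half_log_abs_div hω0 hβα hαβ,
    Real.mul_sinh_add_half_log_abs_div hω0 hβα hαβ, Real.sinh_eq, hexp₁, hexp₂, ← hαβ,
    show β - α - (-β - α) = 2 * β by ring]
  simp only [smul_of, smul_cons, smul_eq_mul, smul_empty]
  congr 1
  have hβ0 := hβpos.ne'
  refine vec2_eq (vec2_eq ?_ ?_) (vec2_eq ?_ ?_) <;> field_simp <;> ring
end

section
/- Let ω0 > 0, 0 < ζ < 1, A = [[0, 1], [−ω0², −2ζω0]], α := ω0 ζ, β̃ := ω0·√(1 − ζ²), and γ := arctan(−α/β̃). Then ∫_0^{2π} exp((2π−τ)·A)·(e^{ατ}/β̃)·(0, sin(β̃τ))ᵀ dτ = (y11, y12)ᵀ and ∫_0^{2π} exp((2π−τ)·A)·(e^{ατ}/β̃)·(0, −ω0·cos(β̃τ + γ))ᵀ dτ = (y21, y22)ᵀ, where y11 = (e^{−2πα}/(4ω0²))·( cos(2πβ̃)·(1 − e^{4πα})/α + sin(2πβ̃)·(1 + e^{4πα})/β̃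 ), y12 = sinh(2πα)·sin(2πβ̃)/(2αβ̃), y21 = −sinh(2πα)·sin(2πβ̃)/(2αβ̃), and y22 = (e^{−2πα}/4)·( cos(2πβ̃)·(1 − e^{4πα})/α − sin(2πβ̃)·(1 + e^{4πα})/β̃ ). -/
/-!
The two integrals are instances of the variation-of-constants formula
`∫₀ᵀ exp ((T - τ) • A) g(τ) dτ = x(T)` for the solution of `x' = A x + g`, `x(0) = 0`.
Since `A` is the companion matrix of `u'' + 2αu' + (α² + β²)u` and both forcings are damped
oscillations `e^{ατ} (p cos βτ + q sin βτ)`, that solution is `x = (u, u')` with `u` an explicit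
particular solution `e^{ατ} (a cos βτ + b sin βτ)` plus the free oscillation
`e^{-ατ} (-a cos βτ + d sin βτ)` that cancels its initial data; the matrix exponential itself is
never computed.
-/

open Real Set Matrix

section MulVec

open scoped Norms.Operator

variable {𝕜 : Type*} [NontriviallyNormedField 𝕜] {m n : Type*} [Fintype m] [Fintype n]

noncomputable def Matrix.mulVecBilinCLM : Matrix m n 𝕜 →L[𝕜] (n → 𝕜) →L[𝕜] m → 𝕜 :=
  (mulVecBilin 𝕜 𝕜).mkContinuous₂ 1 fun M v => by simpa using linfty_opNorm_mulVec M v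

theorem HasDerivAt.matrix_mulVec {M : 𝕜 → Matrix m n 𝕜} {v : 𝕜 → n → 𝕜}
    {M' : Matrix m n 𝕜} {v' : n → 𝕜} {t : 𝕜} (hM : HasDerivAt M M' t) (hv : HasDerivAt v v' t) :
    HasDerivAt (fun t => M t *ᵥ v t) (M t *ᵥ v' + M' *ᵥ v t) t :=
  mulVecBilinCLM.hasDerivAt_of_bilinear (fun _ => hM) (fun _ => hv)

theorem ContinuousOn.matrix_mulVec {X : Type*} [TopologicalSpace X] {M : X → Matrix m n 𝕜}
    {v : X → n → 𝕜} {s : Set X}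
    (hM : ContinuousOn M s) (hv : ContinuousOn v s) : ContinuousOn (fun t => M t *ᵥ v t) s :=
  (mulVecBilinCLM.continuous.comp_continuousOn hM).clm_apply hv

end MulVec

namespace Matrix

variable {n : Type*} [Fintype n] [DecidableEq n]

theorem integral_exp_smul_mulVec_eq_sub (A : Matrix n n ℝ) {x g : ℝ → n → ℝ} {T : ℝ}
    (hx : ∀ t ∈ uIcc 0 T, HasDerivAt x (A *ᵥ x t + g t) t) (hg : ContinuousOn g (uIcc 0 T)) :
    ∫ τ in 0..T, NormedSpace.exp ((T - τ) • A) *ᵥ g τ = x T - NormedSpace.exp (T • A) *ᵥ x 0 := by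
  open scoped Norms.Operator in
  have hexp : ∀ τ, HasDerivAt (fun τ => NormedSpace.exp ((T - τ) • A))
      (-(NormedSpace.exp ((T - τ) • A) * A)) τ := fun τ => by
    have h := (hasDerivAt_exp_smul_const A (T - τ)).scomp τ ((hasDerivAt_id τ).const_sub T)
    simp only [neg_smul, one_smul] at h
    exact h
  have hF : ∀ τ ∈ uIcc 0 T, HasDerivAt (fun τ => NormedSpace.exp ((T - τ) • A) *ᵥ x τ)
      (NormedSpace.exp ((T - τ) • A) *ᵥ g τ) τ := fun τ hτ => by
    convert (hexp τ).matrix_mulVec (hx τ hτ) using 1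
    rw [neg_mulVec, ← mulVec_mulVec, mulVec_add]
    abel
  have hcont : Continuous fun τ => NormedSpace.exp ((T - τ) • A) :=
    continuous_iff_continuousAt.2 fun τ => (hexp τ).continuousAt
  rw [intervalIntegral.integral_eq_sub_of_hasDerivAt hF
    (hcont.continuousOn.matrix_mulVec hg).intervalIntegrable]
  simp

theorem integral_exp_smul_companion_mulVec (k c : ℝ) {u u' h : ℝ → ℝ} {T : ℝ}
    (hu : ∀ t ∈ uIcc 0 T, HasDerivAt u (u' t) t)
    (hu' : ∀ t ∈ uIcc 0 T, HasDerivAt u' (h t - k * u t - c * u' t) t)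
    (hh : ContinuousOn h (uIcc 0 T)) (hu0 : u 0 = 0) (hu'0 : u' 0 = 0) :
    ∫ τ in 0..T, NormedSpace.exp ((T - τ) • !![0, 1; -k, -c]) *ᵥ ![0, h τ] = ![u T, u' T] := by
  have hx : ∀ t ∈ uIcc 0 T, HasDerivAt (fun t => ![u t, u' t])
      (!![0, 1; -k, -c] *ᵥ ![u t, u' t] + ![0, h t]) t := fun t ht => by
    refine hasDerivAt_pi.2 fun i => ?_
    fin_cases i
    · simpa using hu t ht
    · refine (hu' t ht).congr_deriv ?_
      simp only [Fin.mk_one, Fin.isValue, mulVec_cons, mulVec_empty, add_zero, Pi.add_apply,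
        Pi.smul_apply, Function.comp_apply, cons_val_one, cons_val_fin_one, head_cons, tail_cons,
        smul_eq_mul, mul_neg]
      ring
  have hg : ContinuousOn (fun t => ![0, h t]) (uIcc 0 T) :=
    continuousOn_pi.2 fun i => by fin_cases i <;> simp [continuousOn_const, hh]
  rw [integral_exp_smul_mulVec_eq_sub _ hx hg, hu0, hu'0]
  simp

end Matrix

noncomputable def dampedOsc (a b p q t : ℝ) : ℝ :=
  exp (t * a) * (p * cos (t * b) + q * sin (t * b))

theorem dampedOsc_zero (a b p q : ℝ) : dampedOsc a b p q 0 = p := by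
  simp [dampedOsc]

theorem continuous_dampedOsc (a b p q : ℝ) : Continuous (dampedOsc a b p q) := by
  unfold dampedOsc
  fun_prop

theorem hasDerivAt_dampedOsc (a b p q t : ℝ) :
    HasDerivAt (dampedOsc a b p q) (dampedOsc a b (a * p + b * q) (a * q - b * p) t) t := by
  have hlin : ∀ c : ℝ, HasDerivAt (fun t => t * c) c t := fun c => by
    simpa using (hasDerivAt_id t).mul_const c
  refine ((hlin a).exp.mul (((hlin b).cos.const_mul p).add
    ((hlin b).sin.const_mul q))).congr_deriv ?_
  simp only [dampedOsc, Pi.add_apply]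
  ring

/-- `hp`, `hq`: `u = dampedOsc α β a b` solves `u'' + 2αu' + (α² + β²)u = dampedOsc α β p q`;
`hd`: adding the free oscillation `dampedOsc (-α) β (-a) d` makes `u(0) = u'(0) = 0`. -/
theorem integral_exp_smul_underdamped_mulVec_dampedOsc {α β p q a b d T : ℝ}
    (hp : 4 * α * (α * a + β * b) = p) (hq : 4 * α * (α * b - β * a) = q)
    (hd : 2 * α * a + β * b + β * d = 0) :
    ∫ τ in 0..T, NormedSpace.exp ((T - τ) • !![0, 1; -(α ^ 2 + β ^ 2), -(2 * α)]) *ᵥ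
        ![0, dampedOsc α β p q τ] =
      ![dampedOsc α β a b T + dampedOsc (-α) β (-a) d T,
        dampedOsc α β (α * a + β * b) (α * b - β * a) T +
          dampedOsc (-α) β (α * a + β * d) (β * a - α * d) T] := by
  refine integral_exp_smul_companion_mulVec _ _
    (u := fun t => dampedOsc α β a b t + dampedOsc (-α) β (-a) d t)
    (u' := fun t => dampedOsc α β (α * a + β * b) (α * b - β * a) t +
      dampedOsc (-α) β (α * a + β * d) (β * a - α * d) t)
    (fun t _ => ?_) (fun t _ => ?_) (continuous_dampedOsc α β p q).continuousOn ?_ ?_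
  · refine ((hasDerivAt_dampedOsc α β a b t).add
      (hasDerivAt_dampedOsc (-α) β (-a) d t)).congr_deriv ?_
    ring_nf
  · refine ((hasDerivAt_dampedOsc α β _ _ t).add
      (hasDerivAt_dampedOsc (-α) β _ _ t)).congr_deriv ?_
    simp only [dampedOsc]
    linear_combination exp (t * α) * (cos (t * β) * hp + sin (t * β) * hq)
  · simp [dampedOsc_zero]
  · simp only [dampedOsc_zero]
    linear_combination hd

theorem sqrt_sq_add_sq_mul_cos_add_arctan {α β : ℝ} (hβ : 0 < β) (x : ℝ) :
    √(α ^ 2 + β ^ 2) * cos (x + arctan (-(α / β))) = β * cos x + α * sin x := by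
  have hsqrt : √(1 + (-(α / β)) ^ 2) = √(α ^ 2 + β ^ 2) / β := by
    rw [show 1 + (-(α / β)) ^ 2 = (α ^ 2 + β ^ 2) / β ^ 2 by field_simp; ring,
      sqrt_div' _ (sq_nonneg β), sqrt_sq hβ.le]
  rw [cos_add, cos_arctan, sin_arctan, hsqrt]
  field_simp
  ring

/-- Computation of the Jacobian entries for the under-damped harmonic oscillator:
the two defining integrals evaluate to `(y11, y12)ᵀ` and `(y21, y22)ᵀ` with the stated
closed-form expressions. -/
theorem jacobian_under_damped_oscillator
    (ω0 ζ : ℝ) (hω0 : 0 < ω0) (hζ0 : 0 < ζ) (hζ1 : ζ < 1)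
    (A : Matrix (Fin 2) (Fin 2) ℝ) (hA : A = !![0, 1; -ω0 ^ 2, -2 * ζ * ω0])
    (α β γ : ℝ) (hα : α = ω0 * ζ) (hβ : β = ω0 * Real.sqrt (1 - ζ ^ 2))
    (hγ : γ = Real.arctan (-(α / β)))
    (y11 y12 y21 y22 : ℝ)
    (h11 : y11 = (Real.exp (-(2 * π * α)) / (4 * ω0 ^ 2)) *
      (Real.cos (2 * π * β) * (1 - Real.exp (4 * π * α)) / α
        + Real.sin (2 * π * β) * (1 + Real.exp (4 * π * α)) / β))
    (h12 : y12 = Real.sinh (2 * π * α) * Real.sin (2 * π * β) / (2 * α * β))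
    (h21 : y21 = -(Real.sinh (2 * π * α) * Real.sin (2 * π * β) / (2 * α * β)))
    (h22 : y22 = (Real.exp (-(2 * π * α)) / 4) *
      (Real.cos (2 * π * β) * (1 - Real.exp (4 * π * α)) / α
        - Real.sin (2 * π * β) * (1 + Real.exp (4 * π * α)) / β)) :
    (∫ τ in (0:ℝ)..(2 * π), (NormedSpace.exp ((2 * π - τ) • A)).mulVec
        ((Real.exp (α * τ) / β) • ![0, Real.sin (β * τ)])) = ![y11, y12] ∧
    (∫ τ in (0:ℝ)..(2 * π), (NormedSpace.exp ((2 * π - τ) • A)).mulVec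
        ((Real.exp (α * τ) / β) • ![0, -(ω0 * Real.cos (β * τ + γ))])) = ![y21, y22] := by
  have hαpos : 0 < α := hα ▸ mul_pos hω0 hζ0
  have hβpos : 0 < β := hβ ▸ mul_pos hω0 (sqrt_pos.2 (by nlinarith))
  have hω : ω0 ^ 2 = α ^ 2 + β ^ 2 := by
    rw [hα, hβ, mul_pow, mul_pow, sq_sqrt (by nlinarith)]; ring
  have hω' : ω0 = √(α ^ 2 + β ^ 2) := by rw [← hω, sqrt_sq hω0.le]
  have hA' : A = !![0, 1; -(α ^ 2 + β ^ 2), -(2 * α)] := by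
    rw [hA, hω, hα, show -2 * ζ * ω0 = -(2 * (ω0 * ζ)) by ring]
  have hsin : ∀ τ, exp (α * τ) / β * sin (β * τ) = dampedOsc α β 0 β⁻¹ τ := fun τ => by
    rw [dampedOsc]
    ring_nf
  have hcos : ∀ τ, exp (α * τ) / β * -(ω0 * cos (β * τ + γ)) =
      dampedOsc α β (-1) (-(α / β)) τ := fun τ => by
    rw [dampedOsc, hω', hγ, sqrt_sq_add_sq_mul_cos_add_arctan hβpos]
    field_simp
    ring
  simp_rw [smul_cons, smul_eq_mul, mul_zero, Matrix.smul_empty, hsin, hcos, hA']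
  subst h11 h12 h21 h22
  have hE_sq : exp (4 * π * α) = exp (2 * π * α) ^ 2 := by rw [← exp_nat_mul]; ring_nf
  constructor
  · rw [hω, integral_exp_smul_underdamped_mulVec_dampedOsc (a := -1 / (4 * α * (α ^ 2 + β ^ 2)))
      (b := 1 / (4 * β * (α ^ 2 + β ^ 2))) (d := 1 / (4 * β * (α ^ 2 + β ^ 2)))
      (by field_simp; ring) (by field_simp; ring) (by field_simp; ring)]
    simp only [dampedOsc, mul_neg, Real.exp_neg, hE_sq, sinh_eq, vecCons_inj, and_true]
    constructor <;> field_simp <;> ring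
  · rw [integral_exp_smul_underdamped_mulVec_dampedOsc (a := 0) (b := -1 / (4 * α * β))
      (d := 1 / (4 * α * β)) (by field_simp; ring) (by field_simp; ring) (by field_simp; ring)]
    simp only [dampedOsc, mul_neg, Real.exp_neg, hE_sq, sinh_eq, vecCons_inj, and_true]
    constructor <;> field_simp <;> ring
end
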